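/- arXiv:math/0608564 — 5 statements merged into one kernel-verified Lean document; each statement's English description precedes it below -/
import Mathlib

section
/- For any prime p and integers n > 0 and r, the sum over all k with k ≡ r (mod p) of (-1)^k * C(n,k) is divisible by p^⌊(n-1)/(p-1)⌋ (Fleck's congruence). -/
open Nat Finset

private def fleckSum (p n : ℕ) (r : ℤ) : ℤ :=
  ∑ k ∈ Finset.range (n + 1),
    if (p : ℤ) ∣ (k : ℤ) - r then (-1) ^ k * (n.choose k : ℤ) else 0

private def fleckD (f : ℤ → ℤ) : ℤ → ℤ := fun r => f r - f (r - 1)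

private lemma fleckD_iterate (s : ℕ) (f : ℤ → ℤ) (r : ℤ) :
    fleckD^[s] f r = ∑ i ∈ range (s + 1), (-1) ^ i * (s.choose i : ℤ) * f (r - i) := by
  induction s generalizing r with
  | zero => simp
  | succ s ih =>
    rw [Function.iterate_succ_apply']
    show fleckD^[s] f r - fleckD^[s] f (r - 1) = _
    rw [ih r, ih (r - 1)]
    rw [Finset.sum_range_succ' (fun i => (-1 : ℤ) ^ i * ((s + 1).choose i : ℤ) * f (r - i)) (s + 1)]
    have h1 := Finset.sum_range_succ' (fun j => (-1 : ℤ) ^ j * (s.choose j : ℤ) * f (r - j)) (s + 1)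
    have h2 := Finset.sum_range_succ (fun j => (-1 : ℤ) ^ j * (s.choose j : ℤ) * f (r - j)) (s + 1)
    rw [h2] at h1
    simp only [Nat.choose_succ_self, Nat.cast_zero, Nat.cast_ofNat, Nat.cast_zero,
      Nat.choose_zero_right, Nat.cast_one, pow_zero, one_mul, Nat.cast_zero,
      mul_zero, zero_mul, add_zero] at h1
    -- h1 : ∑ range (s+1) g = ∑ i ∈ range (s+1), (-1)^(i+1) * C(s,i+1) * f (r - ↑(i+1)) + f (r - ↑(0:ℕ))
    rw [sub_zero] at h1
    have expand : ∀ i ∈ range (s + 1),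
        (-1 : ℤ) ^ (i + 1) * ((s + 1).choose (i + 1) : ℤ) * f (r - ((i + 1 : ℕ) : ℤ))
        = -((-1) ^ i * (s.choose i : ℤ) * f (r - 1 - (i : ℤ)))
          + (-1) ^ (i + 1) * (s.choose (i + 1) : ℤ) * f (r - ((i + 1 : ℕ) : ℤ)) := by
      intro i _
      have harg : r - ((i + 1 : ℕ) : ℤ) = r - 1 - (i : ℤ) := by push_cast; ring
      rw [Nat.choose_succ_succ]
      rw [harg]
      push_cast
      ring
    rw [Finset.sum_congr rfl expand, Finset.sum_add_distrib]
    simp only [Nat.choose_zero_right, Nat.cast_one, pow_zero, one_mul, Nat.cast_zero, sub_zero]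
    have hsumneg : ∑ i ∈ range (s + 1), -((-1 : ℤ) ^ i * (s.choose i : ℤ) * f (r - 1 - (i : ℤ)))
        = -∑ i ∈ range (s + 1), (-1 : ℤ) ^ i * (s.choose i : ℤ) * f (r - 1 - (i : ℤ)) := by
      rw [Finset.sum_neg_distrib]
    rw [hsumneg]
    linarith [h1]

private lemma fleckSum_succ (p m : ℕ) (r : ℤ) :
    fleckSum p (m + 1) r = fleckSum p m r - fleckSum p m (r - 1) := by
  unfold fleckSum
  rw [Finset.sum_range_succ'
    (fun k => if (p : ℤ) ∣ (k : ℤ) - r then (-1 : ℤ) ^ k * ((m + 1).choose k : ℤ) else 0) (m + 1)]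
  have expand : ∀ k ∈ range (m + 1),
      (if (p : ℤ) ∣ ((k + 1 : ℕ) : ℤ) - r then (-1 : ℤ) ^ (k + 1) * ((m + 1).choose (k + 1) : ℤ) else 0)
      = (if (p : ℤ) ∣ ((k + 1 : ℕ) : ℤ) - r then (-1 : ℤ) ^ (k + 1) * (m.choose (k + 1) : ℤ) else 0)
        + (-(if (p : ℤ) ∣ (k : ℤ) - (r - 1) then (-1 : ℤ) ^ k * (m.choose k : ℤ) else 0)) := by
    intro k _
    have hc : (k : ℤ) - (r - 1) = ((k + 1 : ℕ) : ℤ) - r := by push_cast; ring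
    rw [hc, Nat.choose_succ_succ]
    by_cases h : (p : ℤ) ∣ ((k + 1 : ℕ) : ℤ) - r
    · simp only [if_pos h]; push_cast; ring
    · simp only [if_neg h]; ring
  rw [Finset.sum_congr rfl expand, Finset.sum_add_distrib, Finset.sum_neg_distrib]
  have h1 := Finset.sum_range_succ'
    (fun k => if (p : ℤ) ∣ (k : ℤ) - r then (-1 : ℤ) ^ k * (m.choose k : ℤ) else 0) (m + 1)
  have h2 := Finset.sum_range_succ
    (fun k => if (p : ℤ) ∣ (k : ℤ) - r then (-1 : ℤ) ^ k * (m.choose k : ℤ) else 0) (m + 1)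
  rw [h2] at h1
  simp only [Nat.choose_succ_self, Nat.cast_zero, mul_zero, ite_self, add_zero,
    Nat.choose_zero_right, Nat.cast_one, pow_zero, one_mul, sub_zero] at h1 ⊢
  linarith [h1]

private lemma fleckSum_add (p m : ℕ) (s : ℕ) : ∀ r : ℤ,
    fleckSum p (m + s) r = fleckD^[s] (fleckSum p m) r := by
  induction s with
  | zero => intro r; simp
  | succ s ih =>
    intro r
    have hms : m + (s + 1) = (m + s) + 1 := by omega
    rw [hms, fleckSum_succ, Function.iterate_succ_apply']
    show _ = fleckD^[s] (fleckSum p m) r - fleckD^[s] (fleckSum p m) (r - 1)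
    rw [ih r, ih (r - 1)]

private lemma sum_ite_dvd (p : ℕ) (hp : 0 < p) (x : ℤ) (c : ℤ) :
    ∑ i ∈ range p, (if (p : ℤ) ∣ (i : ℤ) - x then c else 0) = c := by
  haveI : NeZero p := ⟨hp.ne'⟩
  have iff1 : ∀ i, i < p → (((p : ℤ) ∣ (i : ℤ) - x) ↔ i = (x : ZMod p).val) := by
    intro i hi
    rw [← ZMod.intCast_zmod_eq_zero_iff_dvd]
    push_cast
    rw [sub_eq_zero]
    constructor
    · intro h
      rw [← h, ZMod.val_cast_of_lt hi]
    · intro h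
      rw [h]
      exact ZMod.natCast_rightInverse (x : ZMod p)
  calc ∑ i ∈ range p, (if (p : ℤ) ∣ (i : ℤ) - x then c else 0)
      = ∑ i ∈ range p, (if i = (x : ZMod p).val then c else 0) := by
        apply Finset.sum_congr rfl
        intro i hi
        exact if_congr (iff1 i (mem_range.mp hi)) rfl rfl
    _ = c := by
        rw [Finset.sum_ite_eq' (range p) ((x : ZMod p).val) (fun _ => c)]
        simp [ZMod.val_lt]

private lemma sum_fleck_zero (p m : ℕ) (hp : 0 < p) (hm : 0 < m) (r : ℤ) :
    ∑ i ∈ range p, fleckSum p m (r - i) = 0 := by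
  unfold fleckSum
  rw [Finset.sum_comm]
  have key : ∀ k ∈ range (m + 1),
      ∑ i ∈ range p, (if (p : ℤ) ∣ (k : ℤ) - (r - i) then (-1 : ℤ) ^ k * (m.choose k : ℤ) else 0)
      = (-1 : ℤ) ^ k * (m.choose k : ℤ) := by
    intro k _
    have hc : ∀ i : ℕ, (k : ℤ) - (r - i) = (i : ℤ) - (r - k) := by intro i; ring
    simp only [hc]
    exact sum_ite_dvd p hp (r - k) _
  rw [Finset.sum_congr rfl key]
  exact Int.alternating_sum_range_choose_of_ne hm.ne'

private lemma choose_zmod (p : ℕ) (hp : p.Prime) : ∀ i, i < p →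
    (((p - 1).choose i : ℕ) : ZMod p) = (-1) ^ i := by
  haveI := Fact.mk hp
  intro i
  induction i with
  | zero => simp
  | succ i ih =>
    intro hi
    have hi' : i < p := Nat.lt_of_succ_lt hi
    have h1 := ih hi'
    have key : (p - 1).choose (i + 1) * (i + 1) = (p - 1).choose i * (p - 1 - i) :=
      Nat.choose_succ_right_eq (p - 1) i
    have hcast : (((p - 1).choose (i + 1) : ℕ) : ZMod p) * ((i + 1 : ℕ) : ZMod p)
        = (((p - 1).choose i : ℕ) : ZMod p) * ((p - 1 - i : ℕ) : ZMod p) := by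
      exact_mod_cast congrArg (Nat.cast : ℕ → ZMod p) key
    have hadd : (p - 1 - i) + (i + 1) = p := by omega
    have hp1 : ((p - 1 - i : ℕ) : ZMod p) = -((i + 1 : ℕ) : ZMod p) := by
      have h := congrArg (Nat.cast : ℕ → ZMod p) hadd
      push_cast at h
      rw [ZMod.natCast_self] at h
      push_cast
      linear_combination h
    have hunit : ((i + 1 : ℕ) : ZMod p) ≠ 0 := by
      rw [Ne, ZMod.natCast_eq_zero_iff]
      intro hdvd
      have := Nat.le_of_dvd (Nat.succ_pos i) hdvd
      omega
    have heq : (((p - 1).choose (i + 1) : ℕ) : ZMod p)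
        = -(((p - 1).choose i : ℕ) : ZMod p) := by
      apply mul_right_cancel₀ hunit
      rw [hcast, hp1]
      ring
    rw [heq, h1]
    ring

private lemma choose_dvd (p : ℕ) (hp : p.Prime) (i : ℕ) (hi : i < p) :
    (p : ℤ) ∣ (-1) ^ i * (((p - 1).choose i : ℕ) : ℤ) - 1 := by
  haveI := Fact.mk hp
  rw [← ZMod.intCast_zmod_eq_zero_iff_dvd]
  push_cast
  rw [choose_zmod p hp i hi]
  have : ((-1 : ZMod p)) ^ i * (-1) ^ i = 1 := by
    rw [← mul_pow]; norm_num
  rw [this]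
  ring

/-- **Fleck's congruence.** For a prime `p`, `n > 0` and any integer `r`,
`p^⌊(n-1)/(p-1)⌋` divides `Σ_{k ≡ r (mod p)} (-1)^k * C(n,k)`. -/
theorem fleck_congruence (p : ℕ) (hp : p.Prime) (n : ℕ) (hn : 0 < n) (r : ℤ) :
    (p : ℤ) ^ ((n - 1) / (p - 1)) ∣
      ∑ k ∈ Finset.range (n + 1),
        if (p : ℤ) ∣ (k : ℤ) - r then (-1) ^ k * (n.choose k : ℤ) else 0 := by
  suffices h : ∀ N, 0 < N → ∀ x : ℤ, (p : ℤ) ^ ((N - 1) / (p - 1)) ∣ fleckSum p N x by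
    exact h n hn r
  intro N
  induction N using Nat.strong_induction_on with
  | _ N ih =>
    intro hN x
    have hp2 := hp.two_le
    by_cases hnp : N < p
    · have h0 : (N - 1) / (p - 1) = 0 := Nat.div_eq_of_lt (by omega)
      simp [h0]
    · push_neg at hnp
      have hm : 0 < N - (p - 1) := by omega
      set m := N - (p - 1) with hmdef
      have hn_eq : N = m + (p - 1) := by omega
      have hpp : p - 1 + 1 = p := by omega
      have key : fleckSum p N x
          = ∑ i ∈ range p, (-1) ^ i * (((p - 1).choose i : ℕ) : ℤ) * fleckSum p m (x - i) := by
        rw [hn_eq, fleckSum_add, fleckD_iterate, hpp]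
      rw [key]
      have split : ∑ i ∈ range p, (-1 : ℤ) ^ i * (((p - 1).choose i : ℕ) : ℤ) * fleckSum p m (x - i)
          = ∑ i ∈ range p, ((-1) ^ i * (((p - 1).choose i : ℕ) : ℤ) - 1) * fleckSum p m (x - i)
            + ∑ i ∈ range p, fleckSum p m (x - i) := by
        rw [← Finset.sum_add_distrib]
        apply Finset.sum_congr rfl
        intro i _
        ring
      rw [split, sum_fleck_zero p m (by omega) hm x, add_zero]
      have hexp : (N - 1) / (p - 1) = (m - 1) / (p - 1) + 1 := by
        have h1 : N - 1 = (m - 1) + (p - 1) := by omega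
        rw [h1, Nat.add_div_right _ (by omega : 0 < p - 1)]
      rw [hexp, pow_succ]
      apply Finset.dvd_sum
      intro i hi
      have hd1 := choose_dvd p hp i (mem_range.mp hi)
      have hd2 := ih m (by omega) hm (x - i)
      have := mul_dvd_mul hd1 hd2
      calc (p : ℤ) ^ ((m - 1) / (p - 1)) * p
          = (p : ℤ) * p ^ ((m - 1) / (p - 1)) := by ring
        _ ∣ _ := this
end

section
/- For any prime p, positive integers n and α, and integer r, the sum over all k with k ≡ r (mod p^α) of (-1)^k * C(n,k) is divisible by p^⌊(n - p^(α-1))/(p^(α-1)(p-1))⌋ (Weisman's congruence). -/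
open Nat Finset

private lemma weisman_tpow (q k : ℕ) :
    (AddMonoidAlgebra.single (1 : ZMod q) (1 : ℤ)) ^ k
      = AddMonoidAlgebra.single ((k : ZMod q)) 1 := by
  rw [AddMonoidAlgebra.single_pow, one_pow]
  congr 1
  simp [nsmul_eq_mul]

private lemma weisman_expand (q m : ℕ) :
    (1 - AddMonoidAlgebra.single (1 : ZMod q) (1 : ℤ)) ^ m
      = ∑ k ∈ Finset.range (m + 1),
          AddMonoidAlgebra.single ((k : ZMod q)) ((-1) ^ k * (m.choose k : ℤ)) := by
  rw [show (1 - AddMonoidAlgebra.single (1 : ZMod q) (1 : ℤ))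
      = (-AddMonoidAlgebra.single (1 : ZMod q) (1 : ℤ)) + 1 by ring, add_pow]
  refine Finset.sum_congr rfl fun k _ => ?_
  rw [one_pow, mul_one, ← neg_one_zsmul (AddMonoidAlgebra.single (1 : ZMod q) (1 : ℤ)),
    smul_pow, weisman_tpow, smul_mul_assoc, AddMonoidAlgebra.natCast_def,
    AddMonoidAlgebra.single_mul_single, AddMonoidAlgebra.smul_single']
  simp

private lemma weisman_dvd_single (q p : ℕ) (a : ZMod q) (c : ℤ) (h : (p : ℤ) ∣ c) :
    (p : AddMonoidAlgebra ℤ (ZMod q)) ∣ AddMonoidAlgebra.single a c := by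
  obtain ⟨d, rfl⟩ := h
  exact ⟨AddMonoidAlgebra.single a d, by
    rw [AddMonoidAlgebra.natCast_def, AddMonoidAlgebra.single_mul_single, zero_add]⟩

private lemma weisman_choose_pred (p : ℕ) (hp : p.Prime) :
    ∀ k, k ≤ p - 1 → (p : ℤ) ∣ ((p - 1).choose k : ℤ) - (-1) ^ k := by
  intro k
  induction k with
  | zero => intro _; simp
  | succ k ih =>
    intro hk
    have hk' : k ≤ p - 1 := le_of_lt (lt_of_lt_of_le (Nat.lt_succ_self k) hk)
    have h1 : (p : ℤ) ∣ (p.choose (k + 1) : ℤ) := by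
      exact_mod_cast Int.natCast_dvd_natCast.mpr
        (Nat.Prime.dvd_choose_self hp (Nat.succ_ne_zero k)
          (by omega : k + 1 < p))
    have h2 := ih hk'
    have h3 : (p.choose (k + 1) : ℤ) = ((p - 1).choose k : ℤ) + ((p - 1).choose (k + 1) : ℤ) := by
      have h4 := Nat.choose_succ_succ (p - 1) k
      rw [Nat.succ_eq_add_one, Nat.succ_eq_add_one, show p - 1 + 1 = p by omega] at h4
      exact_mod_cast congrArg (Nat.cast : ℕ → ℤ) h4
    have : ((p - 1).choose (k + 1) : ℤ) - (-1) ^ (k + 1)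
        = (p.choose (k + 1) : ℤ) - (((p - 1).choose k : ℤ) - (-1) ^ k) := by
      rw [h3]; ring
    rw [this]
    exact dvd_sub h1 h2

private lemma weisman_sign (p α : ℕ) (hp : p.Prime) :
    (p : ℤ) ∣ (-1) ^ (p ^ (α - 1)) + 1 := by
  rcases Nat.even_or_odd (p ^ (α - 1)) with h | h
  · have hp2 : p = 2 := by
      rcases h with ⟨m, hm⟩
      have h2 : (2 : ℕ) ∣ p ^ (α - 1) := ⟨m, by omega⟩
      have := (Nat.prime_dvd_prime_iff_eq Nat.prime_two hp).mp (Nat.Prime.dvd_of_dvd_pow Nat.prime_two h2)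
      exact this.symm
    rw [h.neg_one_pow, hp2]
    norm_num
  · rw [h.neg_one_pow]
    simp

private lemma weisman_key (p α : ℕ) (hp : p.Prime) (hα : 0 < α) (E s : ℕ) :
    ((p : ℕ) : AddMonoidAlgebra ℤ (ZMod (p ^ α))) ^ E ∣
      (1 - AddMonoidAlgebra.single (1 : ZMod (p ^ α)) (1 : ℤ))
        ^ (p ^ (α - 1) + E * (p ^ (α - 1) * (p - 1)) + s) := by
  set q := p ^ α with hq
  set A := AddMonoidAlgebra ℤ (ZMod q) with hA
  set t : A := AddMonoidAlgebra.single (1 : ZMod q) (1 : ℤ) with ht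
  set u : A := 1 - t with hu
  set q' := p ^ (α - 1) with hq'
  set y : A := t ^ q' with hy
  set N : A := ∑ j ∈ range p, y ^ j with hN
  have hq'pos : 0 < q' := pow_pos hp.pos _
  have hppos := hp.pos
  -- (F1) y ^ p = 1
  have hyp : y ^ p = 1 := by
    rw [hy, ← pow_mul, show q' * p = q by rw [hq', hq, ← pow_succ]; congr 1; omega]
    rw [weisman_tpow]
    rw [show ((q : ℕ) : ZMod q) = 0 from ZMod.natCast_self q, ← AddMonoidAlgebra.one_def]
  -- (F2) N * y = N
  have hNy : N * y = N := by
    have := geom_sum_mul y p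
    rw [hyp, sub_self] at this
    rw [hN]
    linear_combination this
  -- (F2') N * y ^ j = N
  have hNyj : ∀ j : ℕ, N * y ^ j = N := by
    intro j
    induction j with
    | zero => simp
    | succ j ih => rw [pow_succ, ← mul_assoc, ih, hNy]
  -- (F3) N * N = p * N
  have hNN : N * N = (p : A) * N := by
    nth_rewrite 2 [hN]
    rw [Finset.mul_sum]
    rw [Finset.sum_congr rfl fun j _ => hNyj j]
    rw [Finset.sum_const, card_range, nsmul_eq_mul]
  obtain ⟨m, hm⟩ : ∃ m, q' = m + 1 := ⟨q' - 1, by omega⟩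
  have hy_single : y = AddMonoidAlgebra.single ((q' : ZMod q)) 1 := by
    rw [hy, ht, weisman_tpow]
  -- (F4)
  have hpu : (p : A) ∣ u ^ q' - (1 - y) := by
    have heq : u ^ q' - (1 - y)
        = (∑ i ∈ range m,
            AddMonoidAlgebra.single (((i + 1 : ℕ)) : ZMod q)
              ((-1) ^ (i + 1) * (q'.choose (i + 1) : ℤ)))
          + AddMonoidAlgebra.single ((q' : ZMod q)) ((-1) ^ q' + 1) := by
      rw [hu, weisman_expand q q', hy_single, hm]
      rw [Finset.sum_range_succ, Finset.sum_range_succ']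
      rw [show (m + 1).choose (m + 1) = 1 from Nat.choose_self _]
      rw [show AddMonoidAlgebra.single ((0 : ℕ) : ZMod q)
            ((-1 : ℤ) ^ (0 : ℕ) * ((m + 1).choose 0 : ℤ)) = (1 : A) by
        simp
        exact (AddMonoidAlgebra.one_def).symm]
      rw [show AddMonoidAlgebra.single (((m + 1 : ℕ) : ZMod q)) ((-1 : ℤ) ^ (m + 1) + 1)
            = AddMonoidAlgebra.single (((m + 1 : ℕ) : ZMod q)) ((-1 : ℤ) ^ (m + 1))
              + AddMonoidAlgebra.single (((m + 1 : ℕ) : ZMod q)) (1 : ℤ) from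
          AddMonoidAlgebra.single_add _ _ _]
      push_cast
      rw [mul_one]
      ring
    rw [heq]
    refine dvd_add (Finset.dvd_sum fun i hi => ?_) ?_
    · refine weisman_dvd_single q p _ _ (Dvd.dvd.mul_left ?_ _)
      have : p ∣ q'.choose (i + 1) := by
        refine Nat.Prime.dvd_choose_pow hp (Nat.succ_ne_zero i) ?_
        rw [← hq']
        simp at hi
        omega
      exact_mod_cast Int.natCast_dvd_natCast.mpr this
    · exact weisman_dvd_single q p _ _ (weisman_sign p α hp)
  obtain ⟨c₀, hc₀⟩ := hpu
  have hueq : u ^ q' = (1 - y) + (p : A) * c₀ := by linear_combination hc₀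
  have hNu : N * u ^ q' = (p : A) * (N * c₀) := by
    have h1 : N * (1 - y) = 0 := by rw [mul_sub, mul_one, hNy, sub_self]
    rw [hueq, mul_add, h1, zero_add]
    ring
  -- (F5)
  have hpN : (p : A) ∣ (1 - y) ^ (p - 1) - N := by
    have hexp : (1 - y) ^ (p - 1)
        = ∑ k ∈ range p, (-y) ^ k * 1 ^ (p - 1 - k) * (((p - 1).choose k : ℕ) : A) := by
      have h := add_pow (-y) 1 (p - 1)
      rw [show -y + 1 = 1 - y by ring] at h
      rw [h, show p - 1 + 1 = p by omega]
    rw [hexp, hN, ← Finset.sum_sub_distrib]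
    refine Finset.dvd_sum fun k hk => ?_
    have hkle : k ≤ p - 1 := by simp at hk; omega
    have hd : (p : ℤ) ∣ (-1) ^ k * (((p - 1).choose k : ℕ) : ℤ) - 1 := by
      have h2 := weisman_choose_pred p hp k hkle
      have h3 : (-1 : ℤ) ^ k * ((((p - 1).choose k : ℕ) : ℤ) - (-1) ^ k)
          = (-1) ^ k * (((p - 1).choose k : ℕ) : ℤ) - 1 := by
        have h4 : (-1 : ℤ) ^ k * (-1 : ℤ) ^ k = 1 := by rw [← mul_pow]; norm_num
        rw [mul_sub, h4]
      rw [← h3]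
      exact Dvd.dvd.mul_left h2 _
    have heq : (-y) ^ k * 1 ^ (p - 1 - k) * (((p - 1).choose k : ℕ) : A) - y ^ k
        = y ^ k * ((((-1) ^ k * (((p - 1).choose k : ℕ) : ℤ) - 1) : ℤ) : A) := by
      push_cast
      ring
    rw [heq]
    have h5 : ((p : ℕ) : A) ∣ ((((-1) ^ k * (((p - 1).choose k : ℕ) : ℤ) - 1) : ℤ) : A) := by
      have h6 := map_dvd (Int.castRingHom A) hd
      simp only [Int.coe_castRingHom] at h6
      push_cast at h6 ⊢
      exact h6
    exact Dvd.dvd.mul_left h5 _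
  obtain ⟨d, hdd⟩ := hpN
  -- (F7)
  have powaux : ∀ (a b : A) (m : ℕ), ∃ w, (a + (p : A) * b) ^ m = a ^ m + (p : A) * w := by
    intro a b m
    induction m with
    | zero => exact ⟨0, by simp⟩
    | succ m ih =>
      obtain ⟨w, hw⟩ := ih
      exact ⟨b * a ^ m + a * w + (p : A) * (b * w), by rw [pow_succ, hw]; ring⟩
  obtain ⟨w, hw⟩ := powaux (1 - y) c₀ (p - 1)
  set D : A := d + w with hD'
  have hD : u ^ (q' * (p - 1)) = N + (p : A) * D := by
    rw [pow_mul, hueq, hw, hD']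
    linear_combination hdd
  -- (F8) main induction
  have key : ∀ e : ℕ, ∃ a b c : A, u ^ q' * (N + (p : A) * D) ^ e
      = (p : A) ^ e * (u ^ q' * a + N * b + (p : A) * c) := by
    intro e
    induction e with
    | zero => exact ⟨1, 0, 0, by ring⟩
    | succ e ih =>
      obtain ⟨a, b, c, ihe⟩ := ih
      refine ⟨D * a, c₀ * a + b + D * b + c, D * c, ?_⟩
      rw [pow_succ, ← mul_assoc, ihe, pow_succ]
      linear_combination ((p : A) ^ e * a) * hNu + ((p : A) ^ e * b) * hNN
  obtain ⟨a, b, c, hk⟩ := key E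
  have hsplit : u ^ (q' + E * (q' * (p - 1)) + s)
      = (u ^ q' * (N + (p : A) * D) ^ E) * u ^ s := by
    rw [← hD, ← pow_mul, ← pow_add, ← pow_add]
    congr 1
    ring
  rw [hsplit, hk]
  exact ⟨(u ^ q' * a + N * b + (p : A) * c) * u ^ s, by rw [mul_assoc]⟩

/-- **Weisman's congruence.** For a prime `p`, positive integers `n, α` and any
integer `r`, `p^⌊(n - p^(α-1))/(p^(α-1)(p-1))⌋` divides
`Σ_{k ≡ r (mod p^α)} (-1)^k * C(n,k)` (trivially so when the exponent is negative). -/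
theorem weisman_congruence (p : ℕ) (hp : p.Prime) (n α : ℕ) (hn : 0 < n) (hα : 0 < α)
    (r : ℤ) :
    (p : ℤ) ^ ((((n : ℤ) - (p : ℤ) ^ (α - 1)).fdiv ((p : ℤ) ^ (α - 1) * ((p : ℤ) - 1))).toNat) ∣
      ∑ k ∈ Finset.range (n + 1),
        if (p : ℤ) ^ α ∣ (k : ℤ) - r then (-1) ^ k * (n.choose k : ℤ) else 0 := by
  set q := p ^ α with hq
  set F := ((n : ℤ) - (p : ℤ) ^ (α - 1)).fdiv ((p : ℤ) ^ (α - 1) * ((p : ℤ) - 1)) with hF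
  set E := F.toNat with hE
  -- rewrite the sum as a coefficient of (1 - t)^n in the group algebra
  have hcond : ∀ k : ℕ, ((p : ℤ) ^ α ∣ (k : ℤ) - r) ↔ (((k : ℕ) : ZMod q) = ((r : ℤ) : ZMod q)) := by
    intro k
    have hcast : ((q : ℕ) : ℤ) = (p : ℤ) ^ α := by rw [hq]; push_cast; ring
    rw [show (((k : ℕ)) : ZMod q) = (((k : ℕ) : ℤ) : ZMod q) by push_cast; rfl]
    rw [ZMod.intCast_eq_intCast_iff, Int.modEq_iff_dvd, hcast, dvd_sub_comm]
  have hgoal : ∑ k ∈ Finset.range (n + 1),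
        (if (p : ℤ) ^ α ∣ (k : ℤ) - r then (-1) ^ k * (n.choose k : ℤ) else 0)
      = ((1 - AddMonoidAlgebra.single (1 : ZMod q) (1 : ℤ)) ^ n).coeff ((r : ZMod q)) := by
    rw [weisman_expand q n, AddMonoidAlgebra.coeff_sum, Finsupp.finset_sum_apply]
    refine Finset.sum_congr rfl fun k _ => ?_
    rw [AddMonoidAlgebra.coeff_single, Finsupp.single_apply]
    exact if_congr (by rw [hcond k]) rfl rfl
  rw [hgoal]
  by_cases hE0 : E = 0
  · rw [hE0, pow_zero]
    exact one_dvd _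
  · have h2le : (2 : ℤ) ≤ (p : ℤ) := by exact_mod_cast hp.two_le
    have hdpos : (0 : ℤ) < (p : ℤ) ^ (α - 1) * ((p : ℤ) - 1) :=
      mul_pos (pow_pos (by linarith) _) (by linarith)
    have hFpos : 0 < F := by omega
    have hFE : (E : ℤ) = F := Int.toNat_of_nonneg hFpos.le
    have hle : F * ((p : ℤ) ^ (α - 1) * ((p : ℤ) - 1)) ≤ (n : ℤ) - (p : ℤ) ^ (α - 1) := by
      rw [hF, Int.fdiv_eq_ediv_of_nonneg _ hdpos.le]
      exact Int.ediv_mul_le _ hdpos.ne'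
    have hbound : p ^ (α - 1) + E * (p ^ (α - 1) * (p - 1)) ≤ n := by
      have hcast : ((p ^ (α - 1) + E * (p ^ (α - 1) * (p - 1)) : ℕ) : ℤ)
          = (p : ℤ) ^ (α - 1) + (E : ℤ) * ((p : ℤ) ^ (α - 1) * ((p : ℤ) - 1)) := by
        push_cast [Nat.cast_sub hp.one_le]
        ring
      have h3 := hle
      rw [← hFE] at h3
      have h4 : ((p ^ (α - 1) + E * (p ^ (α - 1) * (p - 1)) : ℕ) : ℤ) ≤ (n : ℤ) := by
        rw [hcast]; linarith
      exact_mod_cast h4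
    obtain ⟨s, hs⟩ : ∃ s, n = p ^ (α - 1) + E * (p ^ (α - 1) * (p - 1)) + s :=
      ⟨n - (p ^ (α - 1) + E * (p ^ (α - 1) * (p - 1))), by omega⟩
    have hkey := weisman_key p α hp hα E s
    rw [← hs] at hkey
    obtain ⟨v, hv⟩ := hkey
    rw [hv]
    have hps : ((p : ℕ) : AddMonoidAlgebra ℤ (ZMod q)) ^ E
        = AddMonoidAlgebra.single (0 : ZMod q) ((p : ℤ) ^ E) := by
      rw [AddMonoidAlgebra.natCast_def, AddMonoidAlgebra.single_pow, smul_zero]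
    rw [hps, AddMonoidAlgebra.coeff_single_zero_mul]
    exact Dvd.intro _ rfl
end

section
/- Let p be a prime and n, k natural numbers. Then for any positive integer α, ord_p(k! · S(n,k)) ≥ ord_p(⌊n/p^(α-1)⌋!) − ⌊(n-k)/(p^(α-1)(p-1))⌋, where S(n,k) is the Stirling number of the second kind. -/
open Nat

/-- Stirling numbers of the second kind: `stirling2 n k` is the number of
partitions of an `n`-element set into `k` nonempty blocks. -/
def stirling2 : ℕ → ℕ → ℕ
  | 0, 0 => 1
  | 0, _ + 1 => 0
  | _ + 1, 0 => 0
  | n + 1, k + 1 => (k + 1) * stirling2 n (k + 1) + stirling2 n k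

/-!
`k! S(n, k)` counts surjections `[n] → [k]`; sorting the surjections onto `[k + 1]` by the
preimage of the last point gives `(k + 1)! S(n, k + 1) = ∑_{i < n} C(n, i) k! S(i, k)`, and the
bound follows by induction on `k`, term by term. With `q = p ^ s`, Legendre's formula gives
`ord_p ⌊n/q⌋! = ord_p n! - ∑_{t=1}^{s} ⌊n/p^t⌋`; the subtracted sum is superadditive, so
`ord_p ⌊n/q⌋! ≤ ord_p C(n, i) + ord_p ⌊i/q⌋! + ord_p ⌊(n-i)/q⌋!`. The last term is absorbed
into the floor since `q (p - 1) ord_p ⌊j/q⌋! < j` for `j > 0`.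
-/

theorem factorial_mul_stirling2_succ_succ (n k : ℕ) :
    (k + 1)! * stirling2 (n + 1) (k + 1) =
      (k + 1) * ((k + 1)! * stirling2 n (k + 1) + k ! * stirling2 n k) := by
  rw [stirling2, factorial_succ]
  ring

theorem sum_range_choose_mul_factorial_mul_stirling2 (n k : ℕ) :
    ∑ i ∈ Finset.range (n + 1), n.choose i * (k ! * stirling2 i k) =
      (k + 1)! * stirling2 n (k + 1) + k ! * stirling2 n k := by
  induction n generalizing k with
  | zero => simp [stirling2]
  | succ n ih =>
    have hpascal := Finset.sum_choose_succ_mul (fun i _ => k ! * stirling2 i k) n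
    simp only [Nat.cast_id] at hpascal
    rw [hpascal, ih]
    cases k with
    | zero => simp [stirling2]
    | succ k =>
      have hshift : ∑ i ∈ Finset.range (n + 1), n.choose i * ((k + 1)! * stirling2 (i + 1) (k + 1)) =
          (k + 1) * (∑ i ∈ Finset.range (n + 1), n.choose i * ((k + 1)! * stirling2 i (k + 1)) +
            ∑ i ∈ Finset.range (n + 1), n.choose i * (k ! * stirling2 i k)) := by
        rw [← Finset.sum_add_distrib, Finset.mul_sum]
        refine Finset.sum_congr rfl fun i _ => ?_
        rw [factorial_mul_stirling2_succ_succ]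
        ring
      rw [hshift, ih, ih, factorial_mul_stirling2_succ_succ n (k + 1),
        factorial_mul_stirling2_succ_succ n k]
      ring

theorem factorial_succ_mul_stirling2_eq_sum (n k : ℕ) :
    (k + 1)! * stirling2 n (k + 1) =
      ∑ i ∈ Finset.range n, n.choose i * (k ! * stirling2 i k) := by
  have h := sum_range_choose_mul_factorial_mul_stirling2 n k
  rw [Finset.sum_range_succ, choose_self, one_mul] at h
  omega

section padicValNat

variable {p : ℕ} [hp : Fact p.Prime]

theorem padicValNat_factorial_eq_factorial_div_pow_add (n s : ℕ) :
    padicValNat p n ! =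
      padicValNat p (n / p ^ s)! + ∑ t ∈ Finset.range s, n / p ^ (t + 1) := by
  induction s with
  | zero => simp
  | succ s ih =>
    rw [ih, Finset.sum_range_succ, ← padicValNat_mul_div_factorial (n / p ^ s),
      padicValNat_factorial_mul, Nat.div_div_eq_div_mul, ← pow_succ]
    ring

theorem padicValNat_factorial_add_div_pow_le (a b s : ℕ) :
    padicValNat p ((a + b) / p ^ s)! ≤
      padicValNat p ((a + b).choose a) + padicValNat p (a / p ^ s)! +
        padicValNat p (b / p ^ s)! := by
  have hchoose : padicValNat p (a + b)! =
      padicValNat p ((a + b).choose a) + padicValNat p a ! + padicValNat p b ! := by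
    rw [← add_choose_mul_factorial_mul_factorial, ← choose_symm_add,
      padicValNat.mul (mul_ne_zero (choose_pos (le_add_right a b)).ne' (factorial_ne_zero a))
        (factorial_ne_zero b),
      padicValNat.mul (choose_pos (le_add_right a b)).ne' (factorial_ne_zero a)]
  have hsuper : ∑ t ∈ Finset.range s, a / p ^ (t + 1) + ∑ t ∈ Finset.range s, b / p ^ (t + 1) ≤
      ∑ t ∈ Finset.range s, (a + b) / p ^ (t + 1) := by
    rw [← Finset.sum_add_distrib]
    exact Finset.sum_le_sum fun t _ => div_add_div_le_add_div
  rw [padicValNat_factorial_eq_factorial_div_pow_add _ s,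
    padicValNat_factorial_eq_factorial_div_pow_add a s,
    padicValNat_factorial_eq_factorial_div_pow_add b s] at hchoose
  omega

theorem pow_mul_sub_one_mul_padicValNat_factorial_div_pow_lt (s : ℕ) {j : ℕ} (hj : j ≠ 0) :
    p ^ s * (p - 1) * padicValNat p (j / p ^ s)! < j := by
  rcases eq_or_ne (j / p ^ s) 0 with hzero | hpos
  · simp [hzero, pos_iff_ne_zero.mpr hj]
  · calc p ^ s * (p - 1) * padicValNat p (j / p ^ s)!
        = p ^ s * ((p - 1) * padicValNat p (j / p ^ s)!) := mul_assoc _ _ _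
      _ < p ^ s * (j / p ^ s) :=
        Nat.mul_lt_mul_of_pos_left (sub_one_mul_padicValNat_factorial_lt_of_ne_zero p hpos)
          (pow_pos hp.out.pos s)
      _ ≤ j := mul_div_le j _

end padicValNat

def stirlingValBound (p s n k : ℕ) : ℕ :=
  ((padicValNat p ((n / p ^ s)!) : ℤ) -
    ((n : ℤ) - (k : ℤ)).fdiv ((p : ℤ) ^ s * ((p : ℤ) - 1))).toNat

section stirlingValBound

variable {p : ℕ} [hp : Fact p.Prime]

theorem pow_mul_sub_one_mul_padicValNat_factorial_div_pow_add_lt (s : ℕ) {n i : ℕ} (hi : i < n) :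
    p ^ s * (p - 1) * padicValNat p (n / p ^ s)! + i <
      p ^ s * (p - 1) * (padicValNat p (n.choose i) + padicValNat p (i / p ^ s)!) + n := by
  have hsplit := padicValNat_factorial_add_div_pow_le (p := p) i (n - i) s
  rw [Nat.add_sub_cancel' hi.le] at hsplit
  have hrest := pow_mul_sub_one_mul_padicValNat_factorial_div_pow_lt (p := p) s
    (Nat.sub_ne_zero_of_lt hi)
  have := Nat.mul_le_mul_left (p ^ s * (p - 1)) hsplit
  rw [mul_add, mul_add] at this
  rw [mul_add]
  omega

theorem stirlingValBound_succ_le (s : ℕ) {n i : ℕ} (hi : i < n) (k : ℕ) :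
    stirlingValBound p s n (k + 1) ≤
      padicValNat p (n.choose i) + stirlingValBound p s i k := by
  have hlt := pow_mul_sub_one_mul_padicValNat_factorial_div_pow_add_lt (p := p) s hi
  set m := p ^ s * (p - 1)
  have hm : 0 < (m : ℤ) :=
    Nat.cast_pos.mpr (Nat.mul_pos (pow_pos hp.out.pos s) (Nat.sub_pos_of_lt hp.out.one_lt))
  have hcast : (p : ℤ) ^ s * ((p : ℤ) - 1) = m := by
    push_cast [m, Nat.cast_sub hp.out.one_lt.le]
    ring
  unfold stirlingValBound
  rw [hcast, Int.fdiv_eq_ediv_of_nonneg _ hm.le, Int.fdiv_eq_ediv_of_nonneg _ hm.le, Int.toNat_le,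
    Nat.cast_add (padicValNat p (n.choose i)), Nat.cast_succ k]
  have hfloor : ((i : ℤ) - k) / m + padicValNat p (n / p ^ s)! - padicValNat p (n.choose i) -
      padicValNat p (i / p ^ s)! ≤ ((n : ℤ) - (k + 1)) / m := by
    rw [Int.le_ediv_iff_mul_le hm]
    have := Int.ediv_mul_le ((i : ℤ) - k) hm.ne'
    have hlt' : (m : ℤ) * padicValNat p (n / p ^ s)! + i <
        m * (padicValNat p (n.choose i) + padicValNat p (i / p ^ s)!) + n := by
      exact_mod_cast hlt
    linarith
  linarith [Int.self_le_toNat ((padicValNat p (i / p ^ s)! : ℤ) - ((i : ℤ) - k) / m)]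

theorem pow_stirlingValBound_dvd_factorial_mul_stirling2 (s n k : ℕ) :
    p ^ stirlingValBound p s n k ∣ k ! * stirling2 n k := by
  induction k generalizing n with
  | zero =>
    cases n with
    | zero => simp [stirlingValBound, stirling2]
    | succ n => simp [stirling2]
  | succ k ih =>
    rw [factorial_succ_mul_stirling2_eq_sum]
    refine Finset.dvd_sum fun i hi => ?_
    calc p ^ stirlingValBound p s n (k + 1)
        ∣ p ^ (padicValNat p (n.choose i) + stirlingValBound p s i k) :=
          pow_dvd_pow p (stirlingValBound_succ_le s (Finset.mem_range.mp hi) k)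
      _ ∣ n.choose i * (k ! * stirling2 i k) := by
          rw [pow_add]
          exact mul_dvd_mul pow_padicValNat_dvd (ih i)

end stirlingValBound

theorem ord_factorial_mul_stirling2_general (p : ℕ) (hp : p.Prime) (n k α : ℕ) :
    p ^ (((padicValNat p ((n / p ^ (α - 1))!) : ℤ) -
        ((n : ℤ) - (k : ℤ)).fdiv ((p : ℤ) ^ (α - 1) * ((p : ℤ) - 1))).toNat) ∣
      k ! * stirling2 n k :=
  haveI : Fact p.Prime := ⟨hp⟩
  pow_stirlingValBound_dvd_factorial_mul_stirling2 (α - 1) n k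

/-- For a prime `p`, naturals `n, k` and a positive integer `α`,
`ord_p(k! · S(n,k)) ≥ ord_p(⌊n/p^(α-1)⌋!) − ⌊(n-k)/(p^(α-1)(p-1))⌋`,
stated as a divisibility (which is trivially true when the right side is negative). -/
theorem ord_factorial_mul_stirling2 (p : ℕ) (hp : p.Prime) (n k α : ℕ) (hα : 0 < α) :
    p ^ (((padicValNat p ((n / p ^ (α - 1))!) : ℤ) -
        ((n : ℤ) - (k : ℤ)).fdiv ((p : ℤ) ^ (α - 1) * ((p : ℤ) - 1))).toNat) ∣
      k ! * stirling2 n k :=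
  ord_factorial_mul_stirling2_general p hp n k α
end

section
/- Let n be a positive integer and f any polynomial with rational coefficients. Then Σ_k ⟨n,k⟩ f(k) x^k = Σ_m m! S(n,m) Σ_{i=0}^{n-m} C(n-m,i) (-1)^(n-m-i) f(i) x^i as polynomials in x. -/
open Nat

/-- The Eulerian number `⟨n,k⟩`: the number of permutations of `{1,…,n}`
with exactly `k` ascents. -/
def eulerian (n k : ℕ) : ℕ :=
  (Finset.univ.filter fun σ : Equiv.Perm (Fin n) =>
    (Finset.univ.filter fun i : Fin (n - 1) =>
      σ ⟨i.1, by have := i.2; omega⟩ < σ ⟨i.1 + 1, by have := i.2; omega⟩).card = k).card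

namespace EulerAux

open Finset Equiv

/-- word of a permutation, as a total function on ℕ -/
def w {N : ℕ} (σ : Equiv.Perm (Fin N)) (i : ℕ) : ℕ :=
  if h : i < N then (σ ⟨i, h⟩ : ℕ) else 0

/-- ascent indicator -/
def a {N : ℕ} (σ : Equiv.Perm (Fin N)) (i : ℕ) : ℕ :=
  if i + 1 < N then (if w σ i < w σ (i + 1) then 1 else 0) else 0

/-- ascent count -/
def asc {N : ℕ} (σ : Equiv.Perm (Fin N)) : ℕ :=
  (Finset.univ.filter fun i : Fin (N - 1) =>
      σ ⟨i.1, by have := i.2; omega⟩ < σ ⟨i.1 + 1, by have := i.2; omega⟩).card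

lemma eulerian_eq (N k : ℕ) :
    eulerian N k = (Finset.univ.filter fun σ : Equiv.Perm (Fin N) => asc σ = k).card := rfl

lemma a_le_one {N : ℕ} (σ : Equiv.Perm (Fin N)) (i : ℕ) : a σ i ≤ 1 := by
  unfold a; split <;> [skip; omega]; split <;> omega

lemma asc_eq_sum {N : ℕ} (σ : Equiv.Perm (Fin N)) :
    asc σ = ∑ i ∈ range (N - 1), a σ i := by
  rw [asc, Finset.card_filter, ← Fin.sum_univ_eq_sum_range (a σ) (N - 1)]
  refine Finset.sum_congr rfl fun i _ => ?_
  have hi := i.2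
  have h1 : i.1 < N := by omega
  have h2 : i.1 + 1 < N := by omega
  rw [a, if_pos h2, w, w, dif_pos h1, dif_pos h2]
  rfl

lemma asc_le {N : ℕ} (σ : Equiv.Perm (Fin N)) : asc σ ≤ N - 1 := by
  simpa [asc] using Finset.card_filter_le (Finset.univ : Finset (Fin (N - 1))) _

lemma eulerian_eq_zero {N k : ℕ} (hN : 1 ≤ N) (hk : N ≤ k) : eulerian N k = 0 := by
  rw [eulerian_eq, Finset.card_eq_zero, Finset.filter_eq_empty_iff]
  intro σ _
  have := asc_le σ
  omega

/-- insert the maximum value at position `p` -/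
def ins {n : ℕ} (p : Fin (n + 1)) (τ : Equiv.Perm (Fin n)) : Equiv.Perm (Fin (n + 1)) :=
  ((finSuccEquiv' p).trans (Equiv.optionCongr τ)).trans (finSuccEquiv' (Fin.last n)).symm

lemma ins_apply_self {n : ℕ} (p : Fin (n + 1)) (τ : Equiv.Perm (Fin n)) :
    ins p τ p = Fin.last n := by
  simp [ins, finSuccEquiv'_at, finSuccEquiv'_symm_none]

lemma ins_apply_succAbove {n : ℕ} (p : Fin (n + 1)) (τ : Equiv.Perm (Fin n)) (j : Fin n) :
    ins p τ (p.succAbove j) = (τ j).castSucc := by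
  simp [ins, finSuccEquiv'_succAbove, finSuccEquiv'_symm_some, Fin.succAbove_last]

lemma ins_bijective (n : ℕ) :
    Function.Bijective (fun q : Fin (n + 1) × Equiv.Perm (Fin n) => ins q.1 q.2) := by
  rw [Fintype.bijective_iff_injective_and_card]
  constructor
  · rintro ⟨p, τ⟩ ⟨p', τ'⟩ h
    simp only at h
    have hp : p = p' := by
      have h1 : ins p' τ' p = Fin.last n := by rw [← h]; exact ins_apply_self p τ
      have h2 : ins p' τ' p' = Fin.last n := ins_apply_self p' τ'
      exact (ins p' τ').injective (h1.trans h2.symm)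
    subst hp
    have hτ : τ = τ' := by
      ext j
      have h1 : ins p τ (p.succAbove j) = ins p τ' (p.succAbove j) := by rw [h]
      rw [ins_apply_succAbove, ins_apply_succAbove] at h1
      exact congrArg Fin.val (Fin.castSucc_injective _ h1)
    rw [hτ]
  · simp [Fintype.card_perm, Nat.factorial_succ]

section Words
open Finset Equiv

variable {n : ℕ} (p : Fin (n + 1)) (τ : Equiv.Perm (Fin n))

lemma w_lt {N : ℕ} (hN : 1 ≤ N) (σ : Equiv.Perm (Fin N)) (i : ℕ) : w σ i < N := by
  unfold w; split
  · exact (σ _).2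
  · omega

lemma w_ins_self : w (ins p τ) p.1 = n := by
  have h : p.1 < n + 1 := p.2
  rw [w, dif_pos h]
  have : (⟨p.1, h⟩ : Fin (n + 1)) = p := rfl
  rw [this, ins_apply_self]
  rfl

lemma w_ins_lt {i : ℕ} (hi : i < p.1) : w (ins p τ) i = w τ i := by
  have h1 : i < n + 1 := by have := p.2; omega
  have h2 : i < n := by have := p.2; omega
  rw [w, w, dif_pos h1, dif_pos h2]
  have key : (⟨i, h1⟩ : Fin (n + 1)) = p.succAbove ⟨i, h2⟩ := by
    rw [Fin.succAbove_of_castSucc_lt]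
    · rfl
    · exact hi
  rw [key, ins_apply_succAbove]
  rfl

lemma w_ins_gt {i : ℕ} (hpi : p.1 < i) (hi : i < n + 1) :
    w (ins p τ) i = w τ (i - 1) := by
  have h2 : i - 1 < n := by omega
  rw [w, w, dif_pos hi, dif_pos h2]
  have key : (⟨i, hi⟩ : Fin (n + 1)) = p.succAbove ⟨i - 1, h2⟩ := by
    rw [Fin.succAbove_of_le_castSucc]
    · ext; simp [Fin.succ]; omega
    · rw [Fin.le_castSucc_iff]
      simp only [Fin.lt_def, Fin.succ_mk]
      omega
  rw [key, ins_apply_succAbove]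
  rfl

lemma a_ins_lt {i : ℕ} (hi : i + 1 < p.1) : a (ins p τ) i = a τ i := by
  have hp := p.2
  rw [a, a, if_pos (by omega : i + 1 < n + 1), if_pos (by omega : i + 1 < n),
    w_ins_lt p τ (by omega), w_ins_lt p τ hi]

lemma a_ins_pred (hp : 1 ≤ p.1) : a (ins p τ) (p.1 - 1) = 1 := by
  have hp2 := p.2
  have hn : 1 ≤ n := by omega
  rw [a, if_pos (by omega : p.1 - 1 + 1 < n + 1)]
  have e1 : p.1 - 1 + 1 = p.1 := by omega
  rw [e1, w_ins_self, w_ins_lt p τ (by omega)]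
  rw [if_pos (w_lt hn τ _)]

lemma a_ins_self : a (ins p τ) p.1 = 0 := by
  rw [a]
  split
  · rename_i h
    have hn : 1 ≤ n := by omega
    rw [w_ins_self, w_ins_gt p τ (by omega) h]
    rw [if_neg]
    have := w_lt hn τ (p.1 + 1 - 1)
    omega
  · rfl

lemma a_ins_gt {i : ℕ} (hpi : p.1 < i) (hi : i < n) : a (ins p τ) i = a τ (i - 1) := by
  rw [a, a, if_pos (by omega : i + 1 < n + 1), if_pos (by omega : i - 1 + 1 < n),
    w_ins_gt p τ hpi (by omega), w_ins_gt p τ (by omega) (by omega)]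
  have : i + 1 - 1 = i - 1 + 1 := by omega
  rw [this]

end Words

section Split
open Finset

lemma split_sum (f g : ℕ → ℕ) (m P : ℕ) (hP : P ≤ m + 1)
    (h1 : ∀ i, i + 1 < P → f i = g i)
    (h2 : ∀ i, P < i → i ≤ m → f i = g (i - 1))
    (h3 : f P = 0)
    (h4 : 1 ≤ P → f (P - 1) = 1) :
    (∑ i ∈ range (m + 1), f i) + (if 1 ≤ P ∧ P ≤ m then g (P - 1) else 0)
      = (∑ j ∈ range m, g j) + (if P = 0 then 0 else 1) := by
  rcases Nat.eq_zero_or_pos P with hP0 | hP1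
  · subst hP0
    rw [Finset.sum_range_succ']
    rw [if_neg (by omega), if_pos rfl]
    have : ∀ i ∈ range m, f (i + 1) = g i := fun i hi => by
      rw [h2 (i + 1) (by omega) (by simp at hi; omega)]; simp
    rw [Finset.sum_congr rfl this, h3]
  · obtain ⟨q, rfl⟩ : ∃ q, P = q + 1 := ⟨P - 1, by omega⟩
    rcases Nat.lt_or_ge q m with hqm | hqm
    · -- 1 ≤ P ≤ m
      rw [if_pos ⟨by omega, by omega⟩, if_neg (by omega)]
      obtain ⟨r, hr⟩ : ∃ r, m = q + 1 + r := ⟨m - q - 1, by omega⟩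
      subst hr
      have e1 : q + 1 + r + 1 = (q + 1 + 1) + r := by ring
      rw [e1, Finset.sum_range_add, Finset.sum_range_succ, Finset.sum_range_succ]
      have e2 : q + 1 + r = (q + 1) + r := rfl
      rw [e2, Finset.sum_range_add, Finset.sum_range_succ]
      have hfq : f q = 1 := by have := h4 (by omega); simpa using this
      have hfq1 : f (q + 1) = 0 := h3
      have hs1 : ∀ i ∈ range q, f i = g i := fun i hi => h1 i (by simp at hi; omega)
      have hs2 : ∀ i ∈ range r, f (q + 1 + 1 + i) = g (q + 1 + i) := by
        intro i hi
        simp only [Finset.mem_range] at hi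
        rw [h2 _ (by omega) (by omega)]
        congr 1
        omega
      have A1 : ∑ i ∈ range q, f i = ∑ i ∈ range q, g i := Finset.sum_congr rfl hs1
      have A2 : ∑ i ∈ range r, f (q + 1 + 1 + i) = ∑ i ∈ range r, g (q + 1 + i) :=
        Finset.sum_congr rfl hs2
      simp only [Nat.add_sub_cancel]
      omega
    · -- P = m + 1
      obtain rfl : q = m := by omega
      rw [if_neg (by omega), if_neg (by omega)]
      rw [Finset.sum_range_succ]
      have hfm : f q = 1 := by have := h4 (by omega); simpa using this
      have hs1 : ∀ i ∈ range q, f i = g i := fun i hi => h1 i (by simp at hi; omega)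
      have A1 : ∑ i ∈ range q, f i = ∑ i ∈ range q, g i := Finset.sum_congr rfl hs1
      omega

/-- the increment of the ascent statistic when inserting max at position `P` -/
def delta {m : ℕ} (τ : Equiv.Perm (Fin (m + 1))) (P : ℕ) : ℕ :=
  (if P = 0 then 0 else 1) - (if 1 ≤ P ∧ P ≤ m then a τ (P - 1) else 0)

lemma asc_ins {m : ℕ} (p : Fin (m + 2)) (τ : Equiv.Perm (Fin (m + 1))) :
    asc (ins p τ) = asc τ + delta τ p.1 := by
  have key := split_sum (a (ins p τ)) (a τ) m p.1 (by have := p.2; omega)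
    (fun i hi => a_ins_lt p τ hi)
    (fun i hi1 hi2 => a_ins_gt p τ hi1 (by omega))
    (a_ins_self p τ)
    (fun hp => a_ins_pred p τ hp)
  have e1 : asc (ins p τ) = ∑ i ∈ range (m + 2 - 1), a (ins p τ) i := asc_eq_sum _
  have e2 : asc τ = ∑ i ∈ range (m + 1 - 1), a τ i := asc_eq_sum _
  have r1 : m + 2 - 1 = m + 1 := rfl
  have r2 : m + 1 - 1 = m := rfl
  rw [r1] at e1
  rw [r2] at e2
  rw [← e1, ← e2] at key
  have hb : a τ (p.1 - 1) ≤ 1 := a_le_one τ _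
  unfold delta
  by_cases hA : p.1 = 0
  · rw [if_pos hA] at key ⊢
    rw [if_neg (by omega)] at key ⊢
    omega
  · rw [if_neg hA] at key ⊢
    by_cases hB : 1 ≤ p.1 ∧ p.1 ≤ m
    · rw [if_pos hB] at key ⊢; omega
    · rw [if_neg hB] at key ⊢; omega

end Split
section Count
open Finset

variable {m : ℕ} (τ : Equiv.Perm (Fin (m + 1)))

lemma asc_bound : asc τ ≤ m := asc_le τ

lemma delta_succ {P : ℕ} (hP : P < m) : delta τ (P + 1) = 1 - a τ P := by
  unfold delta; rw [if_neg (by omega), if_pos ⟨by omega, by omega⟩]; simp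

lemma delta_zero : delta τ 0 = 0 := rfl

lemma delta_top : delta τ (m + 1) = 1 := by
  unfold delta; rw [if_neg (by omega), if_neg (by omega)]

lemma count_p (k : ℕ) :
    ∑ p : Fin (m + 2), (if asc (ins p τ) = k then (1:ℕ) else 0)
      = (asc τ + 1) * (if asc τ = k then 1 else 0)
        + (m + 1 - asc τ) * (if asc τ + 1 = k then 1 else 0) := by
  have e : ∀ p : Fin (m + 2), p ∈ Finset.univ →
      (if asc (ins p τ) = k then (1:ℕ) else 0)
        = (fun P : ℕ => if asc τ + delta τ P = k then (1:ℕ) else 0) p.1 :=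
    fun p _ => by rw [asc_ins]
  have estep : ∑ p : Fin (m + 2), (if asc (ins p τ) = k then (1:ℕ) else 0)
      = ∑ P ∈ range (m + 2), (if asc τ + delta τ P = k then (1:ℕ) else 0) := by
    rw [← Fin.sum_univ_eq_sum_range]
    exact Finset.sum_congr rfl e
  rw [estep, Finset.sum_range_succ, Finset.sum_range_succ']
  have hterm : ∀ i ∈ range m,
      (if asc τ + delta τ (i + 1) = k then (1:ℕ) else 0)
        = a τ i * (if asc τ = k then 1 else 0)
          + (1 - a τ i) * (if asc τ + 1 = k then 1 else 0) := by
    intro i hi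
    rw [delta_succ τ (Finset.mem_range.mp hi)]
    rcases Nat.le_one_iff_eq_zero_or_eq_one.mp (a_le_one τ i) with h | h <;> rw [h] <;> simp
  rw [Finset.sum_congr rfl hterm, Finset.sum_add_distrib, ← Finset.sum_mul, ← Finset.sum_mul]
  have S1 : asc τ = ∑ i ∈ range m, a τ i := asc_eq_sum τ
  have S2 : (∑ i ∈ range m, (1 - a τ i)) + ∑ i ∈ range m, a τ i = m := by
    rw [← Finset.sum_add_distrib]
    have h1 : ∀ i ∈ range m, (1 - a τ i) + a τ i = 1 := fun i _ => by
      have := a_le_one τ i; omega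
    rw [Finset.sum_congr rfl h1, Finset.sum_const, card_range, smul_eq_mul, mul_one]
  have hba := asc_bound τ
  rw [delta_zero, delta_top]
  simp only [Nat.add_zero]
  by_cases h1 : asc τ = k <;> by_cases h2 : asc τ + 1 = k
  · omega
  · rw [if_pos h1, if_neg h2]; omega
  · rw [if_neg h1, if_pos h2]; omega
  · rw [if_neg h1, if_neg h2]; omega

lemma eulerian_as_sum (N k : ℕ) :
    eulerian N k = ∑ σ : Equiv.Perm (Fin N), (if asc σ = k then (1:ℕ) else 0) := by
  rw [eulerian_eq, Finset.card_filter]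

lemma eulerian_rec (m k : ℕ) :
    eulerian (m + 2) k
      = ∑ τ : Equiv.Perm (Fin (m + 1)),
          ((asc τ + 1) * (if asc τ = k then (1:ℕ) else 0)
            + (m + 1 - asc τ) * (if asc τ + 1 = k then 1 else 0)) := by
  rw [eulerian_as_sum]
  have hb := Fintype.sum_bijective _ (ins_bijective (m + 1))
    (fun q : Fin (m + 2) × Equiv.Perm (Fin (m + 1)) =>
      if asc (ins q.1 q.2) = k then (1:ℕ) else 0)
    (fun σ => if asc σ = k then (1:ℕ) else 0) (fun q => rfl)
  rw [← hb, Fintype.sum_prod_type, Finset.sum_comm]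
  exact Finset.sum_congr rfl fun τ _ => count_p τ k

lemma eulerian_rec_zero (m : ℕ) : eulerian (m + 2) 0 = eulerian (m + 1) 0 := by
  rw [eulerian_rec, eulerian_as_sum]
  refine Finset.sum_congr rfl fun τ _ => ?_
  by_cases h : asc τ = 0 <;> simp [h]

lemma eulerian_rec_succ (m k : ℕ) :
    eulerian (m + 2) (k + 1)
      = (k + 2) * eulerian (m + 1) (k + 1) + (m + 1 - k) * eulerian (m + 1) k := by
  rw [eulerian_rec, eulerian_as_sum, eulerian_as_sum, Finset.mul_sum, Finset.mul_sum,
    ← Finset.sum_add_distrib]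
  refine Finset.sum_congr rfl fun τ _ => ?_
  by_cases h1 : asc τ = k + 1 <;> by_cases h2 : asc τ = k <;>
    simp [h1, h2]

lemma eulerian_rec_succ_q (m k : ℕ) :
    (eulerian (m + 2) (k + 1) : ℚ)
      = ((k : ℚ) + 2) * eulerian (m + 1) (k + 1)
        + ((m : ℚ) + 1 - k) * eulerian (m + 1) k := by
  rcases Nat.lt_or_ge k (m + 1) with h | h
  · rw [eulerian_rec_succ]
    push_cast [Nat.cast_sub (by omega : k ≤ m + 1)]
    ring
  · rw [eulerian_eq_zero (by omega) (by omega), eulerian_eq_zero (by omega) (by omega),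
      eulerian_eq_zero (by omega) (by omega)]
    simp

lemma eulerian_one_zero : eulerian 1 0 = 1 := by decide

end Count

section Alg
open Finset

/-- the Stirling-side coefficient -/
def Tq (n k : ℕ) : ℚ :=
  ∑ m ∈ Finset.range (n + 1),
    ((m ! * stirling2 n m : ℕ) : ℚ) * ((n - m).choose k : ℚ) * (-1 : ℚ) ^ (n + m + k)

lemma stirling2_eq_zero : ∀ {n m : ℕ}, n < m → stirling2 n m = 0
  | 0, _ + 1, _ => rfl
  | n + 1, m + 1, h => by

      show (m + 1) * stirling2 n (m + 1) + stirling2 n m = 0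
      rw [stirling2_eq_zero (by omega), stirling2_eq_zero (by omega)]
      simp

lemma fact_stirling_succ (n j : ℕ) :
    ((j + 1)! * stirling2 (n + 1) (j + 1) : ℕ)
      = (j + 1) * ((j + 1)! * stirling2 n (j + 1)) + (j + 1) * (j ! * stirling2 n j) := by
  show (j + 1)! * ((j + 1) * stirling2 n (j + 1) + stirling2 n j) = _
  rw [Nat.factorial_succ]
  ring

lemma choose_key (n i k : ℕ) (hi : i ≤ n) :
    ((k : ℚ) + 1) * ((n - i).choose (k + 1) : ℚ)
      = ((n : ℚ) - i - k) * ((n - i).choose k : ℚ) := by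
  have hni : ((n - i : ℕ) : ℚ) = (n : ℚ) - i := by
    rw [Nat.cast_sub hi]
  rcases Nat.lt_or_ge (n - i) (k + 1) with h | h
  · rw [Nat.choose_eq_zero_of_lt h]
    rcases Nat.lt_or_ge (n - i) k with h2 | h2
    · rw [Nat.choose_eq_zero_of_lt h2]
      simp
    · have hk : n - i = k := by omega
      have : (n : ℚ) - i - k = 0 := by
        rw [← hni, hk]; ring
      rw [this]
      simp
  · have := Nat.choose_succ_right_eq (n - i) k
    have hc : (((n - i).choose (k + 1) * (k + 1) : ℕ) : ℚ)
        = (((n - i).choose k * ((n - i) - k) : ℕ) : ℚ) := by rw [this]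
    push_cast [Nat.cast_sub (by omega : k ≤ n - i)] at hc
    rw [Nat.cast_sub hi] at hc
    linarith [hc]
end Alg

section TqRec
open Finset

lemma Tq_succ (n k : ℕ) :
    Tq (n + 1) (k + 1)
      = ((k : ℚ) + 2) * Tq n (k + 1) + ((n : ℚ) - k) * Tq n k := by
  set U : ℕ → ℚ := fun i => ((i ! * stirling2 n i : ℕ) : ℚ) with hU
  set ε : ℕ → ℚ := fun j => (-1 : ℚ) ^ (n + j + k) with hε
  set H : ℕ → ℚ := fun i => (i : ℚ) * U i * (((n + 1 - i).choose (k + 1) : ℕ) : ℚ) * ε i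
    with hH
  have step1 : Tq (n + 1) (k + 1)
      = ∑ j ∈ range (n + 1),
          (((j : ℚ) + 1) * U (j + 1) + ((j : ℚ) + 1) * U j)
            * (((n - j).choose (k + 1) : ℕ) : ℚ) * ε j * (-1) := by
    rw [Tq, Finset.sum_range_succ']
    have hz : ((0! * stirling2 (n + 1) 0 : ℕ) : ℚ) * (((n + 1 - 0).choose (k + 1) : ℕ) : ℚ)
        * (-1 : ℚ) ^ (n + 1 + 0 + (k + 1)) = 0 := by
      have : stirling2 (n + 1) 0 = 0 := rfl
      simp [this]
    rw [hz, add_zero]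
    refine Finset.sum_congr rfl fun j hj => ?_
    have hsub : n + 1 - (j + 1) = n - j := by omega
    have hsgn : (-1 : ℚ) ^ (n + 1 + (j + 1) + (k + 1)) = ε j * (-1) := by
      rw [hε]
      rw [show n + 1 + (j + 1) + (k + 1) = (n + j + k) + 3 by ring]
      rw [show (n + j + k) + 3 = ((n + j + k) + 2) + 1 by ring]
      rw [pow_succ, pow_add]
      norm_num
    rw [hsub, hsgn, fact_stirling_succ]
    simp only [hU]
    push_cast
    ring
  have hshift : ∀ j ∈ range (n + 1),
      ((j : ℚ) + 1) * U (j + 1) * (((n - j).choose (k + 1) : ℕ) : ℚ) * ε j * (-1)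
        = H (j + 1) := by
    intro j hj
    rw [hH]
    simp only
    have hsub : n + 1 - (j + 1) = n - j := by omega
    have hsgn : ε (j + 1) = ε j * (-1) := by
      rw [hε]
      simp only
      rw [show n + (j + 1) + k = (n + j + k) + 1 by ring, pow_succ]
    rw [hsub, hsgn]
    push_cast
    ring
  have hsumH : ∑ j ∈ range (n + 1), H (j + 1) = ∑ i ∈ range (n + 1), H i := by
    have e1 := Finset.sum_range_succ' H (n + 1)
    have e2 := Finset.sum_range_succ H (n + 1)
    have h0 : H 0 = 0 := by rw [hH]; simp
    have htop : H (n + 1) = 0 := by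
      rw [hH]
      simp only
      rw [hU]
      simp only
      rw [stirling2_eq_zero (Nat.lt_succ_self n)]
      simp
    rw [e2, htop, add_zero, h0, add_zero] at e1
    linarith [e1]
  have step2 : Tq (n + 1) (k + 1)
      = ∑ i ∈ range (n + 1),
          (H i + ((i : ℚ) + 1) * U i * (((n - i).choose (k + 1) : ℕ) : ℚ) * ε i * (-1)) := by
    rw [step1]
    rw [Finset.sum_add_distrib]
    have hA : ∑ j ∈ range (n + 1),
        (((j : ℚ) + 1) * U (j + 1)) * (((n - j).choose (k + 1) : ℕ) : ℚ) * ε j * (-1)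
        = ∑ i ∈ range (n + 1), H i := by
      rw [← hsumH]
      exact Finset.sum_congr rfl hshift
    calc ∑ j ∈ range (n + 1),
          (((j : ℚ) + 1) * U (j + 1) + ((j : ℚ) + 1) * U j)
            * (((n - j).choose (k + 1) : ℕ) : ℚ) * ε j * (-1)
        = ∑ j ∈ range (n + 1),
            ((((j : ℚ) + 1) * U (j + 1)) * (((n - j).choose (k + 1) : ℕ) : ℚ) * ε j * (-1)
              + (((j : ℚ) + 1) * U j) * (((n - j).choose (k + 1) : ℕ) : ℚ) * ε j * (-1)) := by
          refine Finset.sum_congr rfl fun j _ => ?_; ring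
      _ = _ := by
          rw [Finset.sum_add_distrib, hA, ← Finset.sum_add_distrib]
  rw [step2]
  have expand : ∀ i ∈ range (n + 1),
      H i + ((i : ℚ) + 1) * U i * (((n - i).choose (k + 1) : ℕ) : ℚ) * ε i * (-1)
        = ((k : ℚ) + 2) * (U i * (((n - i).choose (k + 1) : ℕ) : ℚ) * (-1 : ℚ) ^ (n + i + (k + 1)))
          + ((n : ℚ) - k) * (U i * (((n - i).choose k : ℕ) : ℚ) * (-1 : ℚ) ^ (n + i + k)) := by
    intro i hi
    simp only [Finset.mem_range] at hi
    have hi' : i ≤ n := by omega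
    have hp : (((n + 1 - i).choose (k + 1) : ℕ) : ℚ)
        = (((n - i).choose k : ℕ) : ℚ) + (((n - i).choose (k + 1) : ℕ) : ℚ) := by
      rw [show n + 1 - i = (n - i) + 1 by omega, Nat.choose_succ_succ]
      push_cast
      ring
    have hkey := choose_key n i k hi'
    have hs1 : (-1 : ℚ) ^ (n + i + (k + 1)) = ε i * (-1) := by
      rw [hε]; simp only
      rw [show n + i + (k + 1) = (n + i + k) + 1 by ring, pow_succ]
    have hs2 : (-1 : ℚ) ^ (n + i + k) = ε i := by rw [hε]
    rw [hH]; simp only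
    rw [hp, hs1, hs2]
    linear_combination (U i * ε i) * hkey
  rw [Finset.sum_congr rfl expand, Finset.sum_add_distrib, ← Finset.mul_sum, ← Finset.mul_sum,
    Tq, Tq]

lemma Tq_zero_succ (n : ℕ) : Tq (n + 1) 0 = Tq n 0 := by
  set U : ℕ → ℚ := fun i => ((i ! * stirling2 n i : ℕ) : ℚ) with hU
  set ε : ℕ → ℚ := fun j => (-1 : ℚ) ^ (n + j) with hε
  set H : ℕ → ℚ := fun i => (i : ℚ) * U i * ε i with hH
  have step1 : Tq (n + 1) 0
      = ∑ j ∈ range (n + 1),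
          (((j : ℚ) + 1) * U (j + 1) + ((j : ℚ) + 1) * U j) * ε j := by
    rw [Tq, Finset.sum_range_succ']
    have hz : ((0! * stirling2 (n + 1) 0 : ℕ) : ℚ) * (((n + 1 - 0).choose 0 : ℕ) : ℚ)
        * (-1 : ℚ) ^ (n + 1 + 0 + 0) = 0 := by
      have : stirling2 (n + 1) 0 = 0 := rfl
      simp [this]
    rw [hz, add_zero]
    refine Finset.sum_congr rfl fun j hj => ?_
    have hsgn : (-1 : ℚ) ^ (n + 1 + (j + 1) + 0) = ε j := by
      rw [hε]
      simp only
      rw [show n + 1 + (j + 1) + 0 = (n + j) + 2 by ring, pow_add]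
      norm_num
    rw [hsgn, Nat.choose_zero_right, fact_stirling_succ]
    simp only [hU]
    push_cast
    ring
  have hshift : ∀ j ∈ range (n + 1),
      ((j : ℚ) + 1) * U (j + 1) * ε j = -(H (j + 1)) := by
    intro j hj
    rw [hH]
    simp only
    have hsgn : ε (j + 1) = ε j * (-1) := by
      rw [hε]
      simp only
      rw [show n + (j + 1) = (n + j) + 1 by ring, pow_succ]
    rw [hsgn]
    push_cast
    ring
  have hsumH : ∑ j ∈ range (n + 1), H (j + 1) = ∑ i ∈ range (n + 1), H i := by
    have e1 := Finset.sum_range_succ' H (n + 1)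
    have e2 := Finset.sum_range_succ H (n + 1)
    have h0 : H 0 = 0 := by rw [hH]; simp
    have htop : H (n + 1) = 0 := by
      rw [hH]
      simp only
      rw [hU]
      simp only
      rw [stirling2_eq_zero (Nat.lt_succ_self n)]
      simp
    rw [e2, htop, add_zero, h0, add_zero] at e1
    linarith [e1]
  have step2 : Tq (n + 1) 0
      = ∑ i ∈ range (n + 1), (-(H i) + ((i : ℚ) + 1) * U i * ε i) := by
    rw [step1]
    have hA : ∑ j ∈ range (n + 1), (((j : ℚ) + 1) * U (j + 1)) * ε j
        = ∑ i ∈ range (n + 1), -(H i) := by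
      calc ∑ j ∈ range (n + 1), (((j : ℚ) + 1) * U (j + 1)) * ε j
          = ∑ j ∈ range (n + 1), -(H (j + 1)) := Finset.sum_congr rfl hshift
        _ = -(∑ j ∈ range (n + 1), H (j + 1)) := Finset.sum_neg_distrib _
        _ = -(∑ i ∈ range (n + 1), H i) := by rw [hsumH]
        _ = ∑ i ∈ range (n + 1), -(H i) := (Finset.sum_neg_distrib _).symm
    calc ∑ j ∈ range (n + 1),
          (((j : ℚ) + 1) * U (j + 1) + ((j : ℚ) + 1) * U j) * ε j
        = ∑ j ∈ range (n + 1),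
            ((((j : ℚ) + 1) * U (j + 1)) * ε j + (((j : ℚ) + 1) * U j) * ε j) := by
          refine Finset.sum_congr rfl fun j _ => ?_; ring
      _ = _ := by
          rw [Finset.sum_add_distrib, hA, ← Finset.sum_add_distrib]
  rw [step2, Tq]
  refine Finset.sum_congr rfl fun i hi => ?_
  simp only [hH, hε, hU]
  rw [Nat.choose_zero_right]
  push_cast
  ring

lemma Tq_one_zero : Tq 1 0 = 1 := by
  have h0 : stirling2 1 0 = 0 := rfl
  have h1 : stirling2 1 1 = 1 := rfl
  simp [Tq, Finset.sum_range_succ, h0, h1]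

lemma Tq_one_succ (k : ℕ) : Tq 1 (k + 1) = 0 := by
  have h0 : stirling2 1 0 = 0 := rfl
  simp [Tq, Finset.sum_range_succ, h0, Nat.choose_eq_zero_of_lt (by omega : 0 < k + 1)]

lemma eulerian_eq_Tq (n : ℕ) (hn : 1 ≤ n) (k : ℕ) : (eulerian n k : ℚ) = Tq n k := by
  induction n generalizing k with
  | zero => omega
  | succ m ih =>
    rcases Nat.eq_zero_or_pos m with rfl | hm
    · cases k with
      | zero => rw [eulerian_one_zero, Tq_one_zero]; norm_num
      | succ k => rw [eulerian_eq_zero (by omega) (by omega), Tq_one_succ]; norm_num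
    · obtain ⟨m', rfl⟩ : ∃ m', m = m' + 1 := ⟨m - 1, by omega⟩
      cases k with
      | zero =>
        rw [eulerian_rec_zero, ih (by omega) 0]
        exact (Tq_zero_succ (m' + 1)).symm
      | succ k =>
        rw [eulerian_rec_succ_q, ih (by omega) (k + 1), ih (by omega) k, Tq_succ (m' + 1) k]
        push_cast
        ring

end TqRec

section Assemble
open Finset

lemma sum_range_extend {M : Type*} [AddCommMonoid M] (n a : ℕ) (h : a ≤ n + 1) (f : ℕ → M) :
    ∑ i ∈ range a, f i = ∑ i ∈ range (n + 1), if i < a then f i else 0 := by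
  rw [← Finset.sum_filter]
  congr 1
  ext x
  simp only [Finset.mem_filter, Finset.mem_range]
  omega

lemma sum_triangle {M : Type*} [AddCommMonoid M] (n : ℕ) (F : ℕ → ℕ → M) :
    ∑ m ∈ range (n + 1), ∑ i ∈ range (n + 1 - m), F m i
      = ∑ i ∈ range (n + 1), ∑ m ∈ range (n + 1 - i), F m i := by
  have h1 : ∑ m ∈ range (n + 1), ∑ i ∈ range (n + 1 - m), F m i
      = ∑ m ∈ range (n + 1), ∑ i ∈ range (n + 1), if i < n + 1 - m then F m i else 0 :=
    Finset.sum_congr rfl fun m hm => sum_range_extend n _ (by omega) _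
  have h2 : ∑ i ∈ range (n + 1), ∑ m ∈ range (n + 1 - i), F m i
      = ∑ i ∈ range (n + 1), ∑ m ∈ range (n + 1), if m < n + 1 - i then F m i else 0 :=
    Finset.sum_congr rfl fun i hi => sum_range_extend n _ (by omega) _
  rw [h1, h2, Finset.sum_comm]
  refine Finset.sum_congr rfl fun i hi => Finset.sum_congr rfl fun m hm => ?_
  simp only [Finset.mem_range] at hi hm
  by_cases h : i < n + 1 - m
  · rw [if_pos h, if_pos (by omega)]
  · rw [if_neg h, if_neg (by omega)]

end Assemble

end EulerAux

open Polynomial in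
/-- For a positive integer `n` and any polynomial `f` with rational coefficients,
`Σ_k ⟨n,k⟩ f(k) x^k = Σ_m m! S(n,m) Σ_{i=0}^{n-m} C(n-m,i) (-1)^(n-m-i) f(i) x^i`
as polynomials in `x`. -/
theorem eulerian_poly_identity (n : ℕ) (hn : 0 < n) (f : Polynomial ℚ) :
    ∑ k ∈ Finset.range n, C ((eulerian n k : ℚ) * f.eval (k : ℚ)) * X ^ k =
      ∑ m ∈ Finset.range (n + 1), C ((m ! * stirling2 n m : ℕ) : ℚ) *
        ∑ i ∈ Finset.range (n - m + 1),
          C (((n - m).choose i : ℚ) * (-1) ^ (n - m - i) * f.eval (i : ℚ)) * X ^ i := by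
  have hn' : 1 ≤ n := hn
  have step1 : ∀ m ∈ Finset.range (n + 1),
      C ((m ! * stirling2 n m : ℕ) : ℚ) *
        ∑ i ∈ Finset.range (n - m + 1),
          C (((n - m).choose i : ℚ) * (-1) ^ (n - m - i) * f.eval (i : ℚ)) * X ^ i
      = ∑ i ∈ Finset.range (n + 1 - m),
          C (((m ! * stirling2 n m : ℕ) : ℚ) * (((n - m).choose i : ℕ) : ℚ)
            * (-1 : ℚ) ^ (n + m + i) * f.eval (i : ℚ)) * X ^ i := by
    intro m hm
    simp only [Finset.mem_range] at hm
    rw [show n - m + 1 = n + 1 - m by omega, Finset.mul_sum]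
    refine Finset.sum_congr rfl fun i hi => ?_
    simp only [Finset.mem_range] at hi
    have hsgn : (-1 : ℚ) ^ (n - m - i) = (-1 : ℚ) ^ (n + m + i) := by
      rw [show n + m + i = (n - m - i) + 2 * (m + i) by omega, pow_add, pow_mul]
      norm_num
    rw [← mul_assoc, ← C_mul, hsgn]
    congr 2
    ring
  rw [Finset.sum_congr rfl step1, EulerAux.sum_triangle]
  have step3 : ∀ i ∈ Finset.range (n + 1),
      ∑ m ∈ Finset.range (n + 1 - i),
          C (((m ! * stirling2 n m : ℕ) : ℚ) * (((n - m).choose i : ℕ) : ℚ)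
            * (-1 : ℚ) ^ (n + m + i) * f.eval (i : ℚ)) * X ^ i
        = C (EulerAux.Tq n i * f.eval (i : ℚ)) * X ^ i := by
    intro i hi
    simp only [Finset.mem_range] at hi
    have hTq : EulerAux.Tq n i
        = ∑ m ∈ Finset.range (n + 1 - i),
            ((m ! * stirling2 n m : ℕ) : ℚ) * (((n - m).choose i : ℕ) : ℚ)
              * (-1 : ℚ) ^ (n + m + i) := by
      rw [EulerAux.Tq]
      symm
      apply Finset.sum_subset
      · intro x hx
        simp only [Finset.mem_range] at *
        omega
      · intro x hx hx'
        simp only [Finset.mem_range] at hx hx'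
        rw [Nat.choose_eq_zero_of_lt (by omega : n - x < i)]
        simp
    calc ∑ m ∈ Finset.range (n + 1 - i),
          C (((m ! * stirling2 n m : ℕ) : ℚ) * (((n - m).choose i : ℕ) : ℚ)
            * (-1 : ℚ) ^ (n + m + i) * f.eval (i : ℚ)) * X ^ i
        = (∑ m ∈ Finset.range (n + 1 - i),
            C (((m ! * stirling2 n m : ℕ) : ℚ) * (((n - m).choose i : ℕ) : ℚ)
              * (-1 : ℚ) ^ (n + m + i) * f.eval (i : ℚ))) * X ^ i := by
          rw [Finset.sum_mul]
      _ = C (∑ m ∈ Finset.range (n + 1 - i),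
            ((m ! * stirling2 n m : ℕ) : ℚ) * (((n - m).choose i : ℕ) : ℚ)
              * (-1 : ℚ) ^ (n + m + i) * f.eval (i : ℚ)) * X ^ i := by
          rw [map_sum]
      _ = C ((∑ m ∈ Finset.range (n + 1 - i),
            ((m ! * stirling2 n m : ℕ) : ℚ) * (((n - m).choose i : ℕ) : ℚ)
              * (-1 : ℚ) ^ (n + m + i)) * f.eval (i : ℚ)) * X ^ i := by
          rw [← Finset.sum_mul]
      _ = C (EulerAux.Tq n i * f.eval (i : ℚ)) * X ^ i := by rw [hTq]
  rw [Finset.sum_congr rfl step3]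
  rw [Finset.sum_range_succ]
  have hlast : C (EulerAux.Tq n n * f.eval (n : ℚ)) * X ^ n = 0 := by
    rw [← EulerAux.eulerian_eq_Tq n hn' n, EulerAux.eulerian_eq_zero hn' (le_refl n)]
    simp
  rw [hlast, add_zero]
  exact Finset.sum_congr rfl fun k hk => by rw [EulerAux.eulerian_eq_Tq n hn' k]
end

section
/- Let n and l be nonnegative integers. Then for every integer i with 0 ≤ i ≤ n, the inequality (n-i) · C(i, l-1) ≤ C(n, l) holds. -/
open Nat

/-- For nonnegative integers `n, l` and `0 ≤ i ≤ n`,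
`(n-i) · C(i, l-1) ≤ C(n, l)`, where `C(i,-1) = 0` when `l = 0`. -/
theorem sub_mul_choose_le (n l i : ℕ) (hi : i ≤ n) :
    (n - i) * (if l = 0 then 0 else i.choose (l - 1)) ≤ n.choose l := by
  rcases Nat.eq_zero_or_pos l with rfl | hl
  · simp
  rcases Nat.eq_zero_or_pos n with rfl | hn
  · simp [Nat.le_zero.mp hi]
  set k := l - 1 with hk
  have hln : l = k + 1 := by omega
  have hnn : n = (n - 1) + 1 := by omega
  calc (n - i) * (if l = 0 then 0 else i.choose k)
      = ∑ _m ∈ Finset.Ico i n, i.choose k := by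
        simp [Finset.sum_const, Nat.card_Ico, if_neg (by omega : l ≠ 0)]
    _ ≤ ∑ m ∈ Finset.Ico i n, m.choose k := by
        apply Finset.sum_le_sum
        intro m hm
        exact Nat.choose_le_choose k (Finset.mem_Ico.mp hm).1
    _ ≤ ∑ m ∈ Finset.Icc k (n - 1), m.choose k := by
        rw [← Finset.Ico_add_one_right_eq_Icc]
        have hsub : Finset.Ico i n ⊆ Finset.Ico 0 (n - 1 + 1) := by
          apply Finset.Ico_subset_Ico (Nat.zero_le _) (by omega)
        calc ∑ m ∈ Finset.Ico i n, m.choose k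
            ≤ ∑ m ∈ Finset.Ico 0 (n - 1 + 1), m.choose k :=
              Finset.sum_le_sum_of_subset hsub
          _ = ∑ m ∈ Finset.Ico k (n - 1 + 1), m.choose k := by
              rcases le_or_gt k (n-1+1) with h | h
              · rw [← Finset.sum_Ico_consecutive _ (Nat.zero_le k) h]
                have : ∑ m ∈ Finset.Ico 0 k, m.choose k = 0 := by
                  apply Finset.sum_eq_zero
                  intro m hm
                  exact Nat.choose_eq_zero_of_lt (Finset.mem_Ico.mp hm).2
                omega
              · have h1 : ∑ m ∈ Finset.Ico 0 (n - 1 + 1), m.choose k = 0 := by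
                  apply Finset.sum_eq_zero
                  intro m hm
                  exact Nat.choose_eq_zero_of_lt
                    (by have := (Finset.mem_Ico.mp hm).2; omega)
                rw [h1, Finset.Ico_eq_empty (by omega), Finset.sum_empty]
    _ = n.choose l := by rw [Nat.sum_Icc_choose, ← hnn, ← hln]
end
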